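/- Let G be an open subgroup of GL₂(ℤ_ℓ) and let n₀ ≥ 1 be an integer such that every M ∈ GL₂(ℤ_ℓ) with M ≡ I (mod ℓ^{n₀}) belongs to G. Then for all integers a, b ≥ 0, all n ≥ n₀, and all M₁, M₂ ∈ 𝓜_{a,b}(G)(n), the number of elements of 𝓜_{a,b}(G)(n+1) reducing to M₁ modulo ℓⁿ equals the number of elements of 𝓜_{a,b}(G)(n+1) reducing to M₂ modulo ℓⁿ. -/

import Mathlib

open Matrix Polynomial

/-- Reduction modulo `p^n` on `GL₂(ℤ_p)`. -/
noncomputable def redGL (p : ℕ) [Fact p.Prime] (n : ℕ) :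
    GL (Fin 2) ℤ_[p] →* GL (Fin 2) (ZMod (p ^ n)) :=
  Matrix.GeneralLinearGroup.map (PadicInt.toZModPow n)

/-- `M ≡ I (mod p^k)`. -/
def modI {p : ℕ} [Fact p.Prime] (k : ℕ) (M : GL (Fin 2) ℤ_[p]) : Prop :=
  ∀ i j, ((p : ℤ_[p]) ^ k) ∣ (((M : Matrix (Fin 2) (Fin 2) ℤ_[p]) - 1) i j)

/-- `v_p x = k`, expressed through divisibility (in particular `x ≠ 0`). -/
def valEq {p : ℕ} [Fact p.Prime] (x : ℤ_[p]) (k : ℕ) : Prop :=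
  ((p : ℤ_[p]) ^ k ∣ x) ∧ ¬ ((p : ℤ_[p]) ^ (k + 1) ∣ x)

/-- Condition `E(a,b)`. -/
def CondE {p : ℕ} [Fact p.Prime] (a b : ℕ) (M : GL (Fin 2) ℤ_[p]) : Prop :=
  modI a M ∧ ¬ modI (a + 1) M ∧
    valEq (((M : Matrix (Fin 2) (Fin 2) ℤ_[p]) - 1).det) (2 * a + b)

/-- `𝓜_{a,b}(G)`. -/
def Mset {p : ℕ} [Fact p.Prime] (G : Subgroup (GL (Fin 2) ℤ_[p])) (a b : ℕ) :
    Set (GL (Fin 2) ℤ_[p]) :=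
  {M | M ∈ G ∧ CondE a b M}

/-- `μ_{a,b}(G)`. -/
noncomputable def mu (p : ℕ) [Fact p.Prime] (G : Subgroup (GL (Fin 2) ℤ_[p])) (a b : ℕ) : ℚ :=
  ((redGL p (a + b + 1) '' Mset G a b).ncard : ℚ) /
    ((redGL p (a + b + 1) '' (G : Set (GL (Fin 2) ℤ_[p]))).ncard : ℚ)

/-- `G` is open in `GL₂(ℤ_p)`. -/
def IsOpenSub {p : ℕ} [Fact p.Prime] (G : Subgroup (GL (Fin 2) ℤ_[p])) : Prop :=
  ∃ m : ℕ, 1 ≤ m ∧ ∀ M : GL (Fin 2) ℤ_[p], modI m M → M ∈ G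

/-- The underlying set of the Cartan subgroup `C(c,d)`. -/
def CartanSet {p : ℕ} [Fact p.Prime] (c d : ℤ_[p]) : Set (GL (Fin 2) ℤ_[p]) :=
  {M | ∃ x y : ℤ_[p], (M : Matrix (Fin 2) (Fin 2) ℤ_[p]) = !![x, d * y; y, x + c * y]}

/-- `C` is the Cartan subgroup with parameters `(c,d)`. -/
def IsCartan {p : ℕ} [Fact p.Prime] (c d : ℤ_[p]) (C : Subgroup (GL (Fin 2) ℤ_[p])) : Prop :=
  (C : Set (GL (Fin 2) ℤ_[p])) = CartanSet c d

/-- `(c,d)` are normalized parameters. -/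
def NormalizedParams (p : ℕ) [Fact p.Prime] (c d : ℤ_[p]) : Prop :=
  (c = 0 ∧ d ≠ 0) ∨ (p = 2 ∧ c = 1 ∧ (d = 0 ∨ IsUnit d))

/-- `(c,d)` are parameters of a split Cartan subgroup. -/
def SplitParams (p : ℕ) [Fact p.Prime] (c d : ℤ_[p]) : Prop :=
  (Odd p ∧ c = 0 ∧ ∃ u : ℤ_[p], IsUnit u ∧ d = u ^ 2) ∨ (p = 2 ∧ c = 1 ∧ d = 0)

/-- `(c,d)` are parameters of a nonsplit Cartan subgroup. -/
def NonsplitParams (p : ℕ) [Fact p.Prime] (c d : ℤ_[p]) : Prop :=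
  (Odd p ∧ c = 0 ∧ IsUnit d ∧ ¬ IsSquare d) ∨ (p = 2 ∧ c = 1 ∧ IsUnit d)

/-- Reduction `GL₂(ℤ/p^{n+1}) → GL₂(ℤ/p^n)`. -/
noncomputable def castGL (p : ℕ) [Fact p.Prime] (n : ℕ) :
    GL (Fin 2) (ZMod (p ^ (n + 1))) →* GL (Fin 2) (ZMod (p ^ n)) :=
  Matrix.GeneralLinearGroup.map (ZMod.castHom (pow_dvd_pow p (Nat.le_succ n)) (ZMod (p ^ n)))

/-!
A matrix `A` with `ℓ^a ∣ A`, `ℓ^(a+1) ∤ A` and `v_ℓ(det A) = 2a + b` has Smith normal form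
`ℓ^a · diag(1, ℓ^b)`, so for `N₁, N₂` satisfying `E(a,b)` there are `g, h ∈ GL₂(ℤ_ℓ)` with
`N₂ - 1 = g (N₁ - 1) h`. The affine map `X ↦ 1 + g (X - 1) h` sends `N₁` to `N₂`, preserves
condition `E(a,b)`, and induces an injective map modulo every `ℓ^k`; so it embeds the lifts of
`N₁ mod ℓ^n` satisfying `E(a,b)`, taken modulo `ℓ^(n+1)`, into those of `N₂ mod ℓ^n`, and by
symmetry the two counts agree. Membership in `G` is no constraint on these lifts: a matrix
congruent modulo `ℓ^n` to an element of `G` is invertible and lies in `G`, as `n ≥ n₀`.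
-/

open PadicInt

section TwoByTwo
variable {R : Type*} [CommRing R]

lemma exists_GL_mul_mul_eq_diagonal_of_isUnit_zero_zero {A : Matrix (Fin 2) (Fin 2) R}
    (hA : IsUnit (A 0 0)) :
    ∃ (g h : GL (Fin 2) R) (d : R),
      (g : Matrix (Fin 2) (Fin 2) R) * A * h = diagonal ![1, d] := by
  obtain ⟨u, hu⟩ := hA
  refine ⟨.mk'' !![↑u⁻¹, 0; -A 1 0, ↑u] (by simp [det_fin_two]),
    .mk'' !![1, -(↑u⁻¹ * A 0 1); 0, 1] (by simp [det_fin_two]), A.det, ?_⟩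
  rw [eta_fin_two A]
  ext i j
  fin_cases i <;> fin_cases j <;> simp [det_fin_two, ← hu] <;> ring

lemma exists_GL_mul_mul_eq_diagonal {A : Matrix (Fin 2) (Fin 2) R}
    (hA : ∃ i j, IsUnit (A i j)) :
    ∃ (g h : GL (Fin 2) R) (d : R),
      (g : Matrix (Fin 2) (Fin 2) R) * A * h = diagonal ![1, d] := by
  -- the rotation `J` moves any entry to the top left corner, up to sign
  let J : GL (Fin 2) R := .mk'' !![0, -1; 1, 0] (by simp [det_fin_two])
  suffices ∃ g' h' : GL (Fin 2) R, IsUnit (((g' : Matrix (Fin 2) (Fin 2) R) * A * h') 0 0) by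
    obtain ⟨g', h', hu⟩ := this
    obtain ⟨g, h, d, hgh⟩ := exists_GL_mul_mul_eq_diagonal_of_isUnit_zero_zero hu
    exact ⟨g * g', h' * h, d, by simpa only [Units.val_mul, Matrix.mul_assoc] using hgh⟩
  obtain ⟨i, j, hij⟩ := hA
  fin_cases i <;> fin_cases j
  · exact ⟨1, 1, by simpa using hij⟩
  · exact ⟨1, J, by simpa [J, mul_apply, vecMul, dotProduct, Fin.sum_univ_two] using hij⟩
  · exact ⟨J, 1, by simpa [J, mul_apply, vecMul, dotProduct, Fin.sum_univ_two] using hij⟩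
  · exact ⟨J, J, by simpa [J, mul_apply, vecMul, dotProduct, Fin.sum_univ_two] using hij⟩

end TwoByTwo

section DivisibleEntries
variable {R : Type*} [CommRing R] {n : Type*} [Fintype n]

lemma dvd_mul_mul_apply {d : R} {A : Matrix n n R} (hA : ∀ i j, d ∣ A i j)
    (B C : Matrix n n R) (i j : n) : d ∣ (B * A * C) i j := by
  simp only [mul_apply]
  exact Finset.dvd_sum fun k _ => (Finset.dvd_sum fun l _ => (hA l k).mul_left _).mul_right _

lemma dvd_GL_mul_mul_apply_iff [DecidableEq n] (d : R) (g h : GL n R) (A : Matrix n n R) :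
    (∀ i j, d ∣ ((g : Matrix n n R) * A * h) i j) ↔ ∀ i j, d ∣ A i j := by
  refine ⟨fun hgAh => ?_, fun hA => dvd_mul_mul_apply hA _ _⟩
  simpa [Matrix.mul_assoc] using dvd_mul_mul_apply hgAh ↑g⁻¹ ↑h⁻¹

end DivisibleEntries

section Padic
variable {p : ℕ} [Fact p.Prime]

lemma PadicInt.isUnit_iff_not_dvd {x : ℤ_[p]} : IsUnit x ↔ ¬ (p : ℤ_[p]) ∣ x := by
  rw [← IsLocalRing.notMem_maximalIdeal, maximalIdeal_eq_span_p, Ideal.mem_span_singleton]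

lemma PadicInt.map_toZModPow_eq_zero_iff {m n : Type*} {k : ℕ} {X : Matrix m n ℤ_[p]} :
    X.map (toZModPow k) = 0 ↔ ∀ i j, (p : ℤ_[p]) ^ k ∣ X i j := by
  simp only [← Matrix.ext_iff, map_apply, Matrix.zero_apply, ← Ideal.mem_span_singleton,
    ← ker_toZModPow, RingHom.mem_ker]

lemma PadicInt.isUnit_of_mapMatrix_toZModPow_eq {n : Type*} [Fintype n] [DecidableEq n] {k : ℕ}
    (hk : k ≠ 0) {X Y : Matrix n n ℤ_[p]}
    (hXY : (toZModPow k).mapMatrix X = (toZModPow k).mapMatrix Y) (hY : IsUnit Y) :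
    IsUnit X := by
  rw [isUnit_iff_isUnit_det, isUnit_iff_not_dvd] at hY ⊢
  have hdet : (p : ℤ_[p]) ^ k ∣ X.det - Y.det := by
    rw [← Ideal.mem_span_singleton, ← ker_toZModPow, RingHom.mem_ker, map_sub,
      RingHom.map_det, RingHom.map_det, hXY, sub_self]
  exact fun hX => hY <| (dvd_sub_right hX).mp ((dvd_pow_self _ hk).trans hdet)

lemma modI_iff_redGL_eq_one {k : ℕ} {M : GL (Fin 2) ℤ_[p]} : modI k M ↔ redGL p k M = 1 := by
  rw [modI, ← map_toZModPow_eq_zero_iff, Units.ext_iff, ← RingHom.mapMatrix_apply, map_sub,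
    map_one, sub_eq_zero]
  rfl

lemma valEq_isUnit_mul_iff {u x : ℤ_[p]} (hu : IsUnit u) {k : ℕ} :
    valEq (u * x) k ↔ valEq x k := by
  simp only [valEq, hu.dvd_mul_left]

lemma valEq_pow_mul_iff (m : ℕ) {x : ℤ_[p]} {k : ℕ} :
    valEq ((p : ℤ_[p]) ^ m * x) (m + k) ↔ valEq x k := by
  have hp : (p : ℤ_[p]) ^ m ≠ 0 := pow_ne_zero _ prime_p.ne_zero
  simp only [valEq, pow_add, add_assoc, mul_dvd_mul_iff_left hp]

lemma valEq.exists_eq_pow_mul {x : ℤ_[p]} {k : ℕ} (hx : valEq x k) :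
    ∃ u, IsUnit u ∧ x = (p : ℤ_[p]) ^ k * u := by
  obtain ⟨u, rfl⟩ := hx.1
  refine ⟨u, isUnit_iff_not_dvd.mpr fun hu => hx.2 ?_, rfl⟩
  rw [pow_succ]
  exact mul_dvd_mul_left _ hu

end Padic

section ConditionE
variable {p : ℕ} [Fact p.Prime]

def MatCondE (a b : ℕ) (A : Matrix (Fin 2) (Fin 2) ℤ_[p]) : Prop :=
  (∀ i j, (p : ℤ_[p]) ^ a ∣ A i j) ∧ (¬ ∀ i j, (p : ℤ_[p]) ^ (a + 1) ∣ A i j) ∧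
    valEq A.det (2 * a + b)

lemma condE_iff_matCondE {a b : ℕ} {M : GL (Fin 2) ℤ_[p]} :
    CondE a b M ↔ MatCondE a b ((M : Matrix (Fin 2) (Fin 2) ℤ_[p]) - 1) :=
  Iff.rfl

lemma valEq_det_GL_mul_mul_iff {n : Type*} [Fintype n] [DecidableEq n] (g h : GL n ℤ_[p])
    (A : Matrix n n ℤ_[p]) {k : ℕ} :
    valEq ((g : Matrix n n ℤ_[p]) * A * h).det k ↔ valEq A.det k := by
  have hg := (isUnit_iff_isUnit_det _).mp g.isUnit
  have hh := (isUnit_iff_isUnit_det _).mp h.isUnit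
  rw [det_mul, det_mul, mul_comm, ← mul_assoc, valEq_isUnit_mul_iff (hh.mul hg)]

lemma matCondE_GL_mul_mul_iff {a b : ℕ} (g h : GL (Fin 2) ℤ_[p])
    (A : Matrix (Fin 2) (Fin 2) ℤ_[p]) :
    MatCondE a b
        ((g : Matrix (Fin 2) (Fin 2) ℤ_[p]) * A * (h : Matrix (Fin 2) (Fin 2) ℤ_[p])) ↔
      MatCondE a b A := by
  simp only [MatCondE, dvd_GL_mul_mul_apply_iff, valEq_det_GL_mul_mul_iff]

lemma MatCondE.exists_GL_mul_mul_eq {a b : ℕ} {A : Matrix (Fin 2) (Fin 2) ℤ_[p]}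
    (hA : MatCondE a b A) :
    ∃ g h : GL (Fin 2) ℤ_[p],
      (g : Matrix (Fin 2) (Fin 2) ℤ_[p]) * A * h =
        (p : ℤ_[p]) ^ a • diagonal ![1, (p : ℤ_[p]) ^ b] := by
  obtain ⟨hdvd, hndvd, hval⟩ := hA
  choose A₀ hA₀ using hdvd
  have hA : A = (p : ℤ_[p]) ^ a • Matrix.of A₀ := by ext i j; exact hA₀ i j
  have hunit : ∃ i j, IsUnit (Matrix.of A₀ i j) := by
    by_contra! hnu
    simp only [isUnit_iff_not_dvd, not_not, of_apply] at hnu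
    exact hndvd fun i j => by rw [hA₀ i j, pow_succ]; exact mul_dvd_mul_left _ (hnu i j)
  obtain ⟨g, h, d, hgh⟩ := exists_GL_mul_mul_eq_diagonal hunit
  have hd : valEq d b := by
    rw [hA, det_smul, Fintype.card_fin, ← pow_mul, show 2 * a + b = a * 2 + b by ring,
      valEq_pow_mul_iff, ← valEq_det_GL_mul_mul_iff g h, hgh] at hval
    simpa using hval
  obtain ⟨u, hu, rfl⟩ := hd.exists_eq_pow_mul
  refine ⟨.mk'' (diagonal ![1, ↑hu.unit⁻¹]) (by simp) * g, h, ?_⟩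
  simp only [hA, Units.val_mul, Matrix.mul_smul, Matrix.smul_mul, Matrix.mul_assoc] at hgh ⊢
  rw [hgh, GeneralLinearGroup.val_mk'', diagonal_mul_diagonal]
  congr 2
  ext i
  fin_cases i <;> simp [mul_left_comm _ ((p : ℤ_[p]) ^ b)]

lemma MatCondE.exists_GL_eq_mul_mul {a b : ℕ} {A₁ A₂ : Matrix (Fin 2) (Fin 2) ℤ_[p]}
    (h₁ : MatCondE a b A₁) (h₂ : MatCondE a b A₂) :
    ∃ g h : GL (Fin 2) ℤ_[p], A₂ = (g : Matrix (Fin 2) (Fin 2) ℤ_[p]) * A₁ * h := by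
  obtain ⟨g₁, h₁, e₁⟩ := h₁.exists_GL_mul_mul_eq
  obtain ⟨g₂, h₂, e₂⟩ := h₂.exists_GL_mul_mul_eq
  refine ⟨g₂⁻¹ * g₁, h₁ * h₂⁻¹, ?_⟩
  rw [← e₂] at e₁
  calc A₂ = ↑g₂⁻¹ * (↑g₂ * A₂ * ↑h₂) * ↑h₂⁻¹ := by
        simp only [Matrix.mul_assoc, Units.mul_inv, Matrix.mul_one, Units.inv_mul_cancel_left]
    _ = _ := by rw [← e₁]; simp only [Units.val_mul, Matrix.mul_assoc]

end ConditionE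

lemma ncard_image_le_of_semiconj {α β : Type*} {f : α → β} {φ : α → α} {ψ : β → β}
    (hψ : Function.Injective ψ) (hf : Function.Semiconj f φ ψ) {S T : Set α}
    (hST : Set.MapsTo φ S T) (hT : (f '' T).Finite) : (f '' S).ncard ≤ (f '' T).ncard := by
  rw [← Set.ncard_image_of_injective _ hψ, ← hf.set_image S]
  exact Set.ncard_le_ncard (Set.image_mono hST.image_subset) hT

section Lifts
variable {p : ℕ} [Fact p.Prime]

def liftsCondE (n a b : ℕ) (N : Matrix (Fin 2) (Fin 2) ℤ_[p]) :
    Set (Matrix (Fin 2) (Fin 2) ℤ_[p]) :=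
  {X | (toZModPow (p := p) n).mapMatrix X = (toZModPow n).mapMatrix N ∧ MatCondE a b (X - 1)}

lemma ncard_image_liftsCondE_le {n a b k : ℕ} {N₁ N₂ : Matrix (Fin 2) (Fin 2) ℤ_[p]}
    (h₁ : MatCondE a b (N₁ - 1)) (h₂ : MatCondE a b (N₂ - 1)) :
    ((toZModPow k).mapMatrix '' liftsCondE n a b N₁).ncard ≤
      ((toZModPow k).mapMatrix '' liftsCondE n a b N₂).ncard := by
  obtain ⟨g, h, hgh⟩ := h₁.exists_GL_eq_mul_mul h₂
  set g' : Matrix (Fin 2) (Fin 2) ℤ_[p] := ↑g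
  set h' : Matrix (Fin 2) (Fin 2) ℤ_[p] := ↑h
  have hN₂ : N₂ = 1 + g' * (N₁ - 1) * h' := by rw [← hgh, add_sub_cancel]
  set π := (toZModPow (p := p) k).mapMatrix (m := Fin 2)
  refine ncard_image_le_of_semiconj (φ := fun X => 1 + g' * (X - 1) * h')
    (ψ := fun Y => 1 + π g' * (Y - 1) * π h') ?_ ?_ ?_ (Set.toFinite _)
  · intro Y Y' hYY'
    have hYY' := add_left_cancel hYY'
    rwa [(h.isUnit.map π).mul_left_inj, (g.isUnit.map π).mul_right_inj, sub_left_inj] at hYY'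
  · intro X
    simp only [map_add, map_mul, map_sub, map_one]
  · rintro X ⟨hX, hE⟩
    refine ⟨?_, ?_⟩
    · simp only [hN₂, map_add, map_mul, map_sub, map_one, hX]
    · show MatCondE a b (1 + g' * (X - 1) * h' - 1)
      rw [add_sub_cancel_left]
      exact (matCondE_GL_mul_mul_iff g h _).mpr hE

end Lifts

section Fibers
variable {p : ℕ} [Fact p.Prime]

lemma modI.mono {k n : ℕ} {M : GL (Fin 2) ℤ_[p]} (hM : modI n M) (hkn : k ≤ n) : modI k M :=
  fun i j => (pow_dvd_pow _ hkn).trans (hM i j)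

lemma castGL_redGL (n : ℕ) (M : GL (Fin 2) ℤ_[p]) :
    castGL p n (redGL p (n + 1) M) = redGL p n M := by
  rw [castGL, redGL, redGL, ← MonoidHom.comp_apply, ← GeneralLinearGroup.map_comp,
    zmod_cast_comp_toZModPow n (n + 1) n.le_succ]

lemma ncard_fiber_eq_ncard_image_liftsCondE {G : Subgroup (GL (Fin 2) ℤ_[p])} {n₀ n a b : ℕ}
    (hn₀ : 1 ≤ n₀) (hG : ∀ M : GL (Fin 2) ℤ_[p], modI n₀ M → M ∈ G) (hn : n₀ ≤ n)
    {N : GL (Fin 2) ℤ_[p]} (hN : N ∈ G) :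
    {M' : GL (Fin 2) (ZMod (p ^ (n + 1))) |
        M' ∈ redGL p (n + 1) '' Mset G a b ∧ castGL p n M' = redGL p n N}.ncard =
      ((toZModPow (n + 1)).mapMatrix ''
        liftsCondE n a b (N : Matrix (Fin 2) (Fin 2) ℤ_[p])).ncard := by
  have hfiber : {M' : GL (Fin 2) (ZMod (p ^ (n + 1))) |
      M' ∈ redGL p (n + 1) '' Mset G a b ∧ castGL p n M' = redGL p n N} =
      redGL p (n + 1) '' {N' | N' ∈ Mset G a b ∧ redGL p n N' = redGL p n N} := by
    ext M'
    constructor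
    · rintro ⟨⟨N', hN', rfl⟩, hcast⟩
      exact ⟨N', ⟨hN', by rwa [castGL_redGL] at hcast⟩, rfl⟩
    · rintro ⟨N', ⟨hN', hred⟩, rfl⟩
      exact ⟨⟨N', hN', rfl⟩, by rw [castGL_redGL, hred]⟩
  have hlifts : Units.val '' {N' | N' ∈ Mset G a b ∧ redGL p n N' = redGL p n N} =
      liftsCondE n a b (N : Matrix (Fin 2) (Fin 2) ℤ_[p]) := by
    ext X
    constructor
    · rintro ⟨N', ⟨⟨-, hE⟩, hred⟩, rfl⟩
      exact ⟨Units.ext_iff.mp hred, hE⟩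
    · rintro ⟨hX, hE⟩
      have hXu : IsUnit X := isUnit_of_mapMatrix_toZModPow_eq (by omega) hX N.isUnit
      have hred : redGL p n hXu.unit = redGL p n N := Units.ext hX
      have hmodI : modI n (hXu.unit * N⁻¹) := by
        rw [modI_iff_redGL_eq_one, map_mul, map_inv, hred, mul_inv_cancel]
      refine ⟨hXu.unit, ⟨⟨?_, hE⟩, hred⟩, rfl⟩
      simpa using G.mul_mem (hG _ (hmodI.mono hn)) hN
  rw [hfiber, ← Set.ncard_image_of_injective _ Units.val_injective, Set.image_image, ← hlifts,
    Set.image_image]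
  rfl

end Fibers

/-- for an open subgroup `G` of `GL₂(ℤ_ℓ)`, the number of lifts from
`𝓜_{a,b}(G)(n)` to `𝓜_{a,b}(G)(n+1)` is independent of the matrix. -/
theorem Mset_GL2_lift_count_independent
    (p : ℕ) [Fact p.Prime] (G : Subgroup (GL (Fin 2) ℤ_[p]))
    (n₀ : ℕ) (hn₀ : 1 ≤ n₀) (hG : ∀ M : GL (Fin 2) ℤ_[p], modI n₀ M → M ∈ G)
    (a b n : ℕ) (hn : n₀ ≤ n)
    (M₁ M₂ : GL (Fin 2) (ZMod (p ^ n)))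
    (h₁ : M₁ ∈ redGL p n '' Mset G a b) (h₂ : M₂ ∈ redGL p n '' Mset G a b) :
    {M' : GL (Fin 2) (ZMod (p ^ (n + 1))) |
        M' ∈ redGL p (n + 1) '' Mset G a b ∧ castGL p n M' = M₁}.ncard =
    {M' : GL (Fin 2) (ZMod (p ^ (n + 1))) |
        M' ∈ redGL p (n + 1) '' Mset G a b ∧ castGL p n M' = M₂}.ncard := by
  obtain ⟨N₁, ⟨hN₁G, hN₁E⟩, rfl⟩ := h₁
  obtain ⟨N₂, ⟨hN₂G, hN₂E⟩, rfl⟩ := h₂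
  rw [condE_iff_matCondE] at hN₁E hN₂E
  rw [ncard_fiber_eq_ncard_image_liftsCondE hn₀ hG hn hN₁G,
    ncard_fiber_eq_ncard_image_liftsCondE hn₀ hG hn hN₂G]
  exact le_antisymm (ncard_image_liftsCondE_le hN₁E hN₂E) (ncard_image_liftsCondE_le hN₂E hN₁E)
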